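/- arXiv:1911.10610 — 2 statements merged into one kernel-verified Lean document; each statement's English description precedes it below -/
import Mathlib

section
/- For every n ≥ 4 there exist disjoint point sets R and B in the plane with |R| = |B| = n such that, for every max-sum bichromatic matching E of R and B, the intersection of the n disks {D_{pq} : (p,q) ∈ E} is empty. -/
noncomputable section

/-- Points of the plane with the Euclidean norm. -/
abbrev Pt : Type := EuclideanSpace ℝ (Fin 2)

/-- The closed disk with diameter the segment `pq`: center `(p+q)/2`, radius `‖p-q‖/2`. -/
def disk (p q : Pt) : Set Pt := Metric.closedBall (midpoint ℝ p q) (dist p q / 2)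


/-- Total Euclidean length of the bichromatic matching that matches `p ∈ R` with `f p`. -/
def bmCost (R : Finset Pt) (f : Pt → Pt) : ℝ := ∑ p ∈ R, dist p (f p)

/-- `f` is a max-sum bichromatic matching of `R` and `B`: it is a bijection from `R` onto `B`
maximizing the total Euclidean distance of matched pairs. -/
def IsMaxSumBichromatic (R B : Finset Pt) (f : Pt → Pt) : Prop :=
  Set.BijOn f ↑R ↑B ∧ ∀ g : Pt → Pt, Set.BijOn g ↑R ↑B → bmCost R g ≤ bmCost R f

/-!
Reds: `(1/2, 0)`, the poles `(0, ±1)` and fillers `(-1, 0), (-2, 0), …`; blues: `(0, ∓1/10)` and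
`(100, 0), (101, 0), …`. The distance from a red `r` to a far blue `b` is `b₀ - r₀` up to `O(1/b₀)`,
so exchanging partners between a pole `(0, s)` matched to a far blue and the red `r` matched to
`(0, -s/10)` changes the cost by about `11/10 - (r₀ + ‖r - (0, -s/10)‖) > 0`; and exchanging the
partners of the two poles when crossed gains `2 · (11/10 - 9/10)`. Hence every max-sum matching
sends `(0, ±1) ↦ (0, ∓1/10)`; these two disks meet only where `x² ≤ 1/10`, whereas the disk of
`(1/2, 0)` and its far partner on the `x`-axis lies in `x ≥ 1/2`.
-/

theorem mem_closedBall_midpoint_iff_inner_nonpos {E : Type*} [NormedAddCommGroup E]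
    [InnerProductSpace ℝ E] (p q c : E) :
    c ∈ Metric.closedBall (midpoint ℝ p q) (dist p q / 2) ↔ inner ℝ (c - p) (c - q) ≤ 0 := by
  set u := c - p
  set v := c - q
  have hm : ‖c - midpoint ℝ p q‖ ^ 2 = (‖u‖ ^ 2 + 2 * inner ℝ u v + ‖v‖ ^ 2) / 4 := by
    have : c - midpoint ℝ p q = (2⁻¹ : ℝ) • (u + v) := by
      simp only [u, v, midpoint_eq_smul_add, invOf_eq_inv]; module
    rw [this, norm_smul, mul_pow, norm_add_sq_real]; norm_num; ring
  have hpq : ‖p - q‖ ^ 2 = ‖u‖ ^ 2 - 2 * inner ℝ u v + ‖v‖ ^ 2 := by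
    rw [show p - q = v - u by simp only [u, v]; abel, norm_sub_sq_real, real_inner_comm]; ring
  rw [Metric.mem_closedBall, dist_eq_norm, dist_eq_norm,
    ← sq_le_sq₀ (by positivity) (by positivity), div_pow, hm, hpq]
  constructor <;> intro h <;> linarith

theorem Real.sqrt_sq_add_le {a b : ℝ} (ha : 0 < a) (hb : 0 ≤ b) :
    √(a ^ 2 + b) ≤ a + b / (2 * a) := by
  rw [Real.sqrt_le_left (by positivity), add_sq, mul_div_cancel₀ b (by positivity)]
  have : 0 ≤ (b / (2 * a)) ^ 2 := sq_nonneg _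
  linarith

theorem IsMaxSumBichromatic.dist_swap_le {R B : Finset Pt} {f : Pt → Pt}
    (hf : IsMaxSumBichromatic R B f) {a b : Pt} (ha : a ∈ R) (hb : b ∈ R) :
    dist a (f b) + dist b (f a) ≤ dist a (f a) + dist b (f b) := by
  classical
  rcases eq_or_ne a b with rfl | hab
  · rfl
  have hcost : ∀ g : Pt → Pt, bmCost R g =
      dist a (g a) + dist b (g b) + ∑ p ∈ R \ {a, b}, dist p (g p) := fun g => by
    rw [bmCost, ← Finset.sum_sdiff (Finset.insert_subset ha (Finset.singleton_subset_iff.2 hb)),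
      Finset.sum_pair hab, add_comm]
  have hle := hf.2 (f ∘ Equiv.swap a b) (hf.1.comp (Equiv.bijOn_swap ha hb))
  rw [hcost, hcost, Finset.sum_congr rfl (g := fun p => dist p (f p))] at hle
  · simpa [Equiv.swap_apply_left, Equiv.swap_apply_right] using hle
  · intro p hp
    obtain ⟨hpa, hpb⟩ : p ≠ a ∧ p ≠ b := by simpa [not_or] using (Finset.mem_sdiff.1 hp).2
    simp [Equiv.swap_apply_of_ne_of_ne hpa hpb]

namespace MaxSumDiskCounterexample

open Finset

def pt (x y : ℝ) : Pt := !₂[x, y]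

@[simp] lemma pt_apply_zero (x y : ℝ) : pt x y 0 = x := rfl
@[simp] lemma pt_apply_one (x y : ℝ) : pt x y 1 = y := rfl

@[simp] lemma pt_inj {a b c d : ℝ} : pt a b = pt c d ↔ a = c ∧ b = d :=
  ⟨fun h => ⟨congrArg (· 0) h, congrArg (· 1) h⟩, by rintro ⟨rfl, rfl⟩; rfl⟩

lemma mem_disk_iff {p q c : Pt} :
    c ∈ disk p q ↔ (c 0 - p 0) * (c 0 - q 0) + (c 1 - p 1) * (c 1 - q 1) ≤ 0 := by
  rw [disk, mem_closedBall_midpoint_iff_inner_nonpos]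
  simp [PiLp.inner_apply, Fin.sum_univ_two, mul_comm]

lemma dist_eq_sqrt (p q : Pt) : dist p q = √((p 0 - q 0) ^ 2 + (p 1 - q 1) ^ 2) := by
  simp [EuclideanSpace.dist_eq, Fin.sum_univ_two, Real.dist_eq, sq_abs]

lemma dist_pt_pt_same_fst (a b c : ℝ) : dist (pt a b) (pt a c) = |b - c| := by
  simp [dist_eq_sqrt, Real.sqrt_sq_eq_abs]

lemma sub_fst_le_dist (p q : Pt) : q 0 - p 0 ≤ dist p q := calc
  q 0 - p 0 ≤ dist (p 0) (q 0) := by rw [Real.dist_eq, abs_sub_comm]; exact le_abs_self _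
  _ ≤ dist p q := PiLp.dist_apply_le p q 0

lemma dist_le_of_fst_lt {p q : Pt} (h : p 0 < q 0) :
    dist p q ≤ q 0 - p 0 + (q 1 - p 1) ^ 2 / (2 * (q 0 - p 0)) := by
  rw [dist_eq_sqrt, ← neg_sub (q 0), ← neg_sub (q 1), neg_sq, neg_sq]
  exact Real.sqrt_sq_add_le (sub_pos.2 h) (sq_nonneg _)

lemma notMem_disk_of_fst_lt {p q c : Pt} (hp : p 1 = 0) (hq : q 1 = 0) (hcp : c 0 < p 0)
    (hpq : p 0 ≤ q 0) : c ∉ disk p q := by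
  rw [mem_disk_iff, hp, hq, not_le]
  nlinarith [mul_pos (sub_pos.2 hcp) (sub_pos.2 (hcp.trans_le hpq)), sq_nonneg (c 1)]

def redPole (s : ℝ) : Pt := pt 0 s
def bluePole (s : ℝ) : Pt := pt 0 (-s / 10)
def redNear : Pt := pt (1 / 2) 0
def redFar (i : ℕ) : Pt := pt (-(i + 1)) 0
def blueFar (j : ℕ) : Pt := pt (100 + j) 0

def reds (n : ℕ) : Finset Pt :=
  insert redNear (insert (redPole 1) (insert (redPole (-1)) ((range (n - 3)).image redFar)))

def blues (n : ℕ) : Finset Pt :=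
  insert (bluePole 1) (insert (bluePole (-1)) ((range (n - 2)).image blueFar))

variable {n : ℕ}

lemma mem_reds {x : Pt} :
    x ∈ reds n ↔ x = redNear ∨ x = redPole 1 ∨ x = redPole (-1) ∨ ∃ i < n - 3, x = redFar i := by
  simp [reds, eq_comm]

lemma mem_blues {x : Pt} :
    x ∈ blues n ↔ x = bluePole 1 ∨ x = bluePole (-1) ∨ ∃ j < n - 2, x = blueFar j := by
  simp [blues, eq_comm]

lemma card_reds (hn : 3 ≤ n) : (reds n).card = n := by
  have hinj : Function.Injective redFar := fun i j h => by simpa [redFar] using h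
  rw [reds, card_insert_of_notMem, card_insert_of_notMem, card_insert_of_notMem,
    card_image_of_injective _ hinj, card_range]
  · omega
  all_goals norm_num [redNear, redPole, redFar]
  all_goals intros; linarith

lemma card_blues (hn : 2 ≤ n) : (blues n).card = n := by
  have hinj : Function.Injective blueFar := fun i j h => by simpa [blueFar] using h
  rw [blues, card_insert_of_notMem, card_insert_of_notMem, card_image_of_injective _ hinj,
    card_range]
  · omega
  all_goals norm_num [bluePole, blueFar]

lemma disjoint_reds_blues : Disjoint (reds n) (blues n) := by
  refine disjoint_left.2 fun x hr hb => ?_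
  rcases mem_reds.1 hr with rfl | rfl | rfl | ⟨i, -, rfl⟩ <;>
    rcases mem_blues.1 hb with h | h | ⟨j, -, h⟩ <;>
    norm_num [redNear, redPole, redFar, bluePole, blueFar] at h <;>
    linarith

lemma redPole_mem {s : ℝ} (hs : |s| = 1) : redPole s ∈ reds n := by
  rcases (abs_eq zero_le_one).1 hs with rfl | rfl <;> simp [reds]

lemma redNear_mem : redNear ∈ reds n := by simp [reds]

lemma bluePole_mem {s : ℝ} (hs : |s| = 1) : bluePole s ∈ blues n := by
  rcases (abs_eq zero_le_one).1 hs with rfl | rfl <;> simp [blues]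

lemma le_fst_and_snd_eq_zero_of_mem_blues {s : ℝ} (hs : |s| = 1) {b : Pt} (hb : b ∈ blues n)
    (h₁ : b ≠ bluePole s) (h₂ : b ≠ bluePole (-s)) : 100 ≤ b 0 ∧ b 1 = 0 := by
  rcases mem_blues.1 hb with rfl | rfl | ⟨j, -, rfl⟩
  · rcases (abs_eq zero_le_one).1 hs with rfl | rfl <;> simp at h₁ h₂
  · rcases (abs_eq zero_le_one).1 hs with rfl | rfl <;> simp at h₁ h₂
  · simp [blueFar]

lemma dist_redPole_bluePole (s t : ℝ) : dist (redPole s) (bluePole t) = |s + t / 10| := by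
  rw [redPole, bluePole, dist_pt_pt_same_fst]
  ring_nf

lemma add_dist_bluePole_le {s : ℝ} (hs : |s| = 1) {r : Pt} (hr : r ∈ reds n)
    (hne : r ≠ redPole s) : r 0 + dist r (bluePole s) ≤ 51 / 50 := by
  have hs2 : s ^ 2 = 1 := by rw [← sq_abs, hs, one_pow]
  rcases mem_reds.1 hr with rfl | rfl | rfl | ⟨i, -, rfl⟩
  · have := dist_le_of_fst_lt (p := bluePole s) (q := redNear) (by norm_num [bluePole, redNear])
    norm_num [bluePole, redNear, div_pow, hs2] at this ⊢
    rw [dist_comm]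
    linarith
  · obtain rfl : s = -1 := ((abs_eq zero_le_one).1 hs).resolve_left (by rintro rfl; exact hne rfl)
    rw [dist_redPole_bluePole]
    norm_num [redPole]
  · obtain rfl : s = 1 := ((abs_eq zero_le_one).1 hs).resolve_right (by rintro rfl; exact hne rfl)
    rw [dist_redPole_bluePole]
    norm_num [redPole]
  · have := dist_le_of_fst_lt (p := redFar i) (q := bluePole s)
      (by simp [bluePole, redFar]; linarith)
    norm_num [bluePole, redFar, div_pow, hs2] at this ⊢
    have : (1 / 100 : ℝ) / (2 * (i + 1)) ≤ 1 / 100 := div_le_self (by norm_num) (by linarith)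
    linarith

lemma dist_redPole_le {s : ℝ} (hs : |s| = 1) {b : Pt} (hb₀ : 100 ≤ b 0) (hb₁ : b 1 = 0) :
    dist (redPole s) b ≤ b 0 + 1 / 200 := by
  have := dist_le_of_fst_lt (p := redPole s) (q := b) (by simp [redPole]; linarith)
  simp only [redPole, pt_apply_zero, pt_apply_one, hb₁, sub_zero, zero_sub, neg_sq, ← sq_abs s,
    hs] at this ⊢
  have : 1 ^ 2 / (2 * b 0) ≤ 1 / 200 := by
    rw [div_le_div_iff₀ (by linarith) (by norm_num)]; linarith
  linarith

variable {f : Pt → Pt}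

lemma isMaxSum_apply_redPole (hf : IsMaxSumBichromatic (reds n) (blues n) f) {s : ℝ}
    (hs : |s| = 1) : f (redPole s) = bluePole s ∨ f (redPole s) = bluePole (-s) := by
  by_contra! h
  obtain ⟨hb₀, hb₁⟩ :=
    le_fst_and_snd_eq_zero_of_mem_blues hs (hf.1.mapsTo (redPole_mem hs)) h.1 h.2
  obtain ⟨r, hr, hfr⟩ := hf.1.surjOn (bluePole_mem (n := n) hs)
  have hne : r ≠ redPole s := by rintro rfl; exact h.1 hfr
  have hswap := hf.dist_swap_le (redPole_mem hs) hr
  rw [hfr, dist_redPole_bluePole, show s + s / 10 = 11 / 10 * s by ring, abs_mul, hs,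
    mul_one] at hswap
  have hr_far := sub_fst_le_dist r (f (redPole s))
  have hpole_far := dist_redPole_le hs hb₀ hb₁
  have hr_pole := add_dist_bluePole_le hs hr hne
  linarith

lemma isMaxSum_apply_redPoles (hf : IsMaxSumBichromatic (reds n) (blues n) f) :
    f (redPole 1) = bluePole 1 ∧ f (redPole (-1)) = bluePole (-1) := by
  have hinj : f (redPole 1) ≠ f (redPole (-1)) :=
    hf.1.injOn.ne (redPole_mem (by norm_num)) (redPole_mem (by norm_num)) (by norm_num [redPole])
  have hswap :=
    hf.dist_swap_le (redPole_mem (s := 1) (by norm_num)) (redPole_mem (s := -1) (by norm_num))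
  rcases isMaxSum_apply_redPole hf (s := 1) (by norm_num) with hup | hup <;>
    rcases isMaxSum_apply_redPole hf (s := -1) (by norm_num) with hdown | hdown
  · exact ⟨hup, hdown⟩
  · rw [neg_neg] at hdown; exact absurd (hup.trans hdown.symm) hinj
  · exact absurd (hup.trans hdown.symm) hinj
  · rw [neg_neg] at hdown
    rw [hup, hdown, dist_redPole_bluePole, dist_redPole_bluePole, dist_redPole_bluePole,
      dist_redPole_bluePole] at hswap
    norm_num at hswap

lemma isMaxSum_apply_redNear (hf : IsMaxSumBichromatic (reds n) (blues n) f) :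
    100 ≤ f redNear 0 ∧ f redNear 1 = 0 := by
  obtain ⟨hup, hdown⟩ := isMaxSum_apply_redPoles hf
  have hne : ∀ s, |s| = 1 → f redNear ≠ f (redPole s) := fun s hs =>
    hf.1.injOn.ne redNear_mem (redPole_mem hs) (by simp [redNear, redPole])
  exact le_fst_and_snd_eq_zero_of_mem_blues (s := 1) (by norm_num) (hf.1.mapsTo redNear_mem)
    (hup ▸ hne 1 (by norm_num)) (hdown ▸ hne (-1) (by norm_num))

lemma sq_fst_le_of_mem_disk_redPoles {c : Pt} (hup : c ∈ disk (redPole 1) (bluePole 1))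
    (hdown : c ∈ disk (redPole (-1)) (bluePole (-1))) : c 0 ^ 2 ≤ 1 / 10 := by
  rw [mem_disk_iff] at hup hdown
  norm_num [redPole, bluePole] at hup hdown
  nlinarith [sq_nonneg (c 1)]

end MaxSumDiskCounterexample

open MaxSumDiskCounterexample in
/-- For every n ≥ 4 there are disjoint n-point sets R and B such that for every max-sum
bichromatic matching, the n disks of the matching have empty intersection. -/
theorem stmt3 (n : ℕ) (hn : 4 ≤ n) :
    ∃ R B : Finset Pt, Disjoint R B ∧ R.card = n ∧ B.card = n ∧
      ∀ f : Pt → Pt, IsMaxSumBichromatic R B f →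
        (⋂ p ∈ (R : Set Pt), disk p (f p)) = ∅ := by
  refine ⟨reds n, blues n, disjoint_reds_blues, card_reds (by omega), card_blues (by omega),
    fun f hf => Set.eq_empty_of_forall_notMem fun c hc => ?_⟩
  have hdisk : ∀ p ∈ reds n, c ∈ disk p (f p) := fun p hp => Set.mem_iInter₂.1 hc p hp
  obtain ⟨hup, hdown⟩ := isMaxSum_apply_redPoles hf
  have hc₀ := sq_fst_le_of_mem_disk_redPoles (hup ▸ hdisk _ (redPole_mem (by norm_num)))
    (hdown ▸ hdisk _ (redPole_mem (by norm_num)))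
  obtain ⟨hb₀, hb₁⟩ := isMaxSum_apply_redNear hf
  exact notMem_disk_of_fst_lt rfl hb₁ (show c 0 < 1 / 2 by nlinarith)
    (show 1 / 2 ≤ f redNear 0 by linarith) (hdisk _ redNear_mem)
end
end

section
/- For any n ≥ 2 and any disjoint planar point sets R and B with |R| = |B| = n, let E = {(a_i,b_i) : i = 1,…,n} be a max-sum bichromatic matching of R and B, and let o be the midpoint of a shortest segment of the matching (i.e., o = (a_j+b_j)/2 for an index j minimizing ‖a_j−b_j‖). Then for all i ∈ {1,…,n}, ‖a_i−o‖ + ‖b_i−o‖ ≤ √5 · ‖a_i−b_i‖. -/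
noncomputable section

/-!
Exchanging the partners of `p` and of the shortest pair `(j, f j)` cannot increase the total
length, so `‖p - f j‖ + ‖j - f p‖ ≤ ‖p - f p‖ + ‖j - f j‖ ≤ 2 ‖p - f p‖`. With `o` the midpoint
of `j f j`, `u = p - o`, `v = f p - o`, we have `u + v = (p - f j) + (f p - j)` and
`u - v = p - f p`, hence `‖u + v‖ ≤ 2 ‖u - v‖`, and the parallelogram law gives
`(‖u‖ + ‖v‖)² ≤ 2 (‖u‖² + ‖v‖²) = ‖u + v‖² + ‖u - v‖² ≤ 5 ‖u - v‖²`.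
-/

theorem Finset.sum_comp_swap_add_add {ι M : Type*} [DecidableEq ι] [AddCommMonoid M]
    {s : Finset ι} {a b : ι} (ha : a ∈ s) (hb : b ∈ s) (hab : a ≠ b) (F : ι → ι → M) :
    ∑ x ∈ s, F x (Equiv.swap a b x) + (F a a + F b b) = ∑ x ∈ s, F x x + (F a b + F b a) := by
  have hsub : {a, b} ⊆ s := Finset.insert_subset ha (Finset.singleton_subset_iff.mpr hb)
  have hrest : ∑ x ∈ s \ {a, b}, F x (Equiv.swap a b x) = ∑ x ∈ s \ {a, b}, F x x := by
    refine Finset.sum_congr rfl fun x hx => ?_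
    simp only [Finset.mem_sdiff, Finset.mem_insert, Finset.mem_singleton, not_or] at hx
    rw [Equiv.swap_apply_of_ne_of_ne hx.2.1 hx.2.2]
  rw [← Finset.sum_sdiff hsub, ← Finset.sum_sdiff (f := fun x => F x x) hsub, hrest,
    Finset.sum_pair hab, Finset.sum_pair hab, Equiv.swap_apply_left, Equiv.swap_apply_right]
  abel

theorem IsMaxSumBichromatic.dist_add_dist_le {R B : Finset Pt} {f : Pt → Pt}
    (hf : IsMaxSumBichromatic R B f) {p j : Pt} (hp : p ∈ R) (hj : j ∈ R) :
    dist p (f j) + dist j (f p) ≤ dist p (f p) + dist j (f j) := by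
  classical
  rcases eq_or_ne p j with rfl | hpj
  · rfl
  have hswap : bmCost R (f ∘ Equiv.swap p j) ≤ bmCost R f :=
    hf.2 _ (hf.1.comp (Equiv.bijOn_swap hp hj))
  have hsum := Finset.sum_comp_swap_add_add hp hj hpj fun x y => dist x (f y)
  simp only [bmCost, Function.comp_apply] at hswap
  linarith

theorem norm_add_norm_le_sqrt_five_mul {E : Type*} [NormedAddCommGroup E] [InnerProductSpace ℝ E]
    {u v : E} (h : ‖u + v‖ ≤ 2 * ‖u - v‖) : ‖u‖ + ‖v‖ ≤ √5 * ‖u - v‖ := by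
  have hpar : ‖u + v‖ ^ 2 + ‖u - v‖ ^ 2 = 2 * (‖u‖ ^ 2 + ‖v‖ ^ 2) := by
    simpa only [← sq] using parallelogram_law_with_norm ℝ u v
  have hsq : (‖u‖ + ‖v‖) ^ 2 ≤ (√5 * ‖u - v‖) ^ 2 := by
    rw [mul_pow, Real.sq_sqrt (by norm_num)]
    nlinarith [sq_nonneg (‖u‖ - ‖v‖), norm_nonneg (u + v)]
  exact (pow_le_pow_iff_left₀ (by positivity) (by positivity) two_ne_zero).mp hsq

theorem dist_add_dist_midpoint_le_sqrt_five_mul {E : Type*} [NormedAddCommGroup E]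
    [InnerProductSpace ℝ E] {a b c d : E} (hswap : dist a d + dist c b ≤ dist a b + dist c d)
    (hcd : dist c d ≤ dist a b) :
    dist a (midpoint ℝ c d) + dist b (midpoint ℝ c d) ≤ √5 * dist a b := by
  set o := midpoint ℝ c d
  have hsum : (a - o) + (b - o) = (a - d) + (b - c) :=
    calc (a - o) + (b - o) = a + b - (o + o) := by abel
      _ = (a - d) + (b - c) := by rw [midpoint_add_self]; abel
  have hdiff : (a - o) - (b - o) = a - b := sub_sub_sub_cancel_right a b o
  have hbound : ‖(a - o) + (b - o)‖ ≤ 2 * ‖(a - o) - (b - o)‖ := by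
    rw [hsum, hdiff, ← dist_eq_norm]
    calc ‖(a - d) + (b - c)‖ ≤ dist a d + dist c b := by
          rw [dist_eq_norm, dist_comm, dist_eq_norm]; exact norm_add_le _ _
      _ ≤ 2 * dist a b := by linarith
  simpa only [dist_eq_norm, hdiff] using norm_add_norm_le_sqrt_five_mul hbound

theorem stmt5_general (R B : Finset Pt) (f : Pt → Pt)
    (hf : IsMaxSumBichromatic R B f)
    (j : Pt) (hj : j ∈ R) (hjmin : ∀ p ∈ R, dist j (f j) ≤ dist p (f p)) :
    ∀ p ∈ R, dist p (midpoint ℝ j (f j)) + dist (f p) (midpoint ℝ j (f j)) ≤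
      Real.sqrt 5 * dist p (f p) := fun p hp =>
  dist_add_dist_midpoint_le_sqrt_five_mul (hf.dist_add_dist_le hp hj) (hjmin p hp)

/-- Taking o as the midpoint of a shortest segment of a max-sum bichromatic matching,
every pair (p, f p) satisfies ‖p-o‖ + ‖f p - o‖ ≤ √5 ‖p - f p‖. -/
theorem stmt5 (n : ℕ) (hn : 2 ≤ n) (R B : Finset Pt) (hdisj : Disjoint R B)
    (hR : R.card = n) (hB : B.card = n) (f : Pt → Pt)
    (hf : IsMaxSumBichromatic R B f)
    (j : Pt) (hj : j ∈ R) (hjmin : ∀ p ∈ R, dist j (f j) ≤ dist p (f p)) :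
    ∀ p ∈ R, dist p (midpoint ℝ j (f j)) + dist (f p) (midpoint ℝ j (f j)) ≤
      Real.sqrt 5 * dist p (f p) :=
  stmt5_general R B f hf j hj hjmin
end
end
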